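/- For Lebesgue-almost every real number t, the averages (1/N) · Σ_{n=1}^{N} Λ(n) e^{2πint} converge to 0 as N → ∞. -/

import Mathlib

/-!
Write `S_N(t) = ∑_{n ≤ N} Λ(n) e(nt)`. The characters `e(nt)` are orthonormal on every unit
interval, so `∫ |S_N / N|² = N⁻² ∑_{n ≤ N} Λ(n)² ≤ (log N)² / N`. Along `N = k⁴` these bounds are
at most `16 / k²`, which is summable; hence `∑_k |S_{k⁴}(t) / k⁴|² < ∞` and `S_{k⁴}(t) / k⁴ → 0`
for almost every `t`. For `k⁴ ≤ N < (k + 1)⁴` the trivial bound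
`|S_N - S_{k⁴}| ≤ (N - k⁴) log N = O(k³ log k) = o(N)` fills the gaps.
-/

open Filter Finset MeasureTheory
open Complex Topology
open scoped Real ComplexConjugate ENNReal

theorem ae_tendsto_zero_of_tsum_lintegral_enorm_sq_ne_top {α E : Type*} [MeasurableSpace α]
    {μ : Measure α} [NormedAddCommGroup E] {f : ℕ → α → E}
    (hf : ∀ k, AEStronglyMeasurable (f k) μ) (h : ∑' k, ∫⁻ x, ‖f k x‖ₑ ^ 2 ∂μ ≠ ∞) :
    ∀ᵐ x ∂μ, Tendsto (fun k => f k x) atTop (𝓝 0) := by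
  have hmeas : ∀ k, AEMeasurable (fun x => ‖f k x‖ₑ ^ 2) μ := fun k => (hf k).enorm.pow_const 2
  rw [← lintegral_tsum hmeas] at h
  filter_upwards [ae_lt_top' (AEMeasurable.tsum hmeas) h] with x hx
  have hsq := ENNReal.tendsto_atTop_zero_of_tsum_ne_top hx.ne
  rw [tendsto_zero_iff_enorm_tendsto_zero]
  have hroot := (ENNReal.continuous_rpow_const (y := ((2 : ℕ) : ℝ)⁻¹)).tendsto 0 |>.comp hsq
  simpa only [ENNReal.zero_rpow_of_pos (by norm_num : (0 : ℝ) < ((2 : ℕ) : ℝ)⁻¹),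
    Function.comp_def, ENNReal.pow_rpow_inv_natCast two_ne_zero] using hroot

theorem ae_of_forall_ae_restrict_Ioc_intCast {p : ℝ → Prop}
    (h : ∀ m : ℤ, ∀ᵐ t ∂volume.restrict (Set.Ioc (m : ℝ) (m + 1)), p t) : ∀ᵐ t, p t := by
  rwa [← Measure.restrict_univ (μ := volume), ← iUnion_Ioc_intCast, ae_restrict_iUnion_iff]

noncomputable def expSum (s : Finset ℕ) (c : ℕ → ℂ) (t : ℝ) : ℂ :=
  ∑ n ∈ s, c n * exp (2 * π * I * n * t)

theorem continuous_expSum (s : Finset ℕ) (c : ℕ → ℂ) : Continuous (expSum s c) := by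
  unfold expSum
  fun_prop

theorem const_mul_expSum (z : ℂ) (s : Finset ℕ) (c : ℕ → ℂ) (t : ℝ) :
    z * expSum s c t = expSum s (fun n => z * c n) t := by
  simp only [expSum, mul_sum, mul_assoc]

theorem norm_expSum_le (s : Finset ℕ) (c : ℕ → ℂ) (t : ℝ) : ‖expSum s c t‖ ≤ ∑ n ∈ s, ‖c n‖ := by
  refine (norm_sum_le _ _).trans (sum_le_sum fun n _ => ?_)
  rw [norm_mul, norm_exp]
  simp

theorem integral_exp_two_pi_I_int_mul (a : ℝ) (j : ℤ) :
    ∫ t in a..a + 1, exp (2 * π * I * j * t) = if j = 0 then 1 else 0 := by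
  split_ifs with hj
  · simp [hj]
  have hc : 2 * π * I * j ≠ 0 := by simp [Real.pi_ne_zero, I_ne_zero, hj]
  rw [integral_exp_mul_complex hc, div_eq_zero_iff, sub_eq_zero]
  left
  push_cast
  rw [mul_add, exp_add, mul_one, show 2 * π * I * j = j * (2 * π * I) by ring,
    exp_int_mul_two_pi_mul_I, mul_one]

theorem integral_exp_mul_conj_exp (a : ℝ) (n m : ℕ) :
    ∫ t in a..a + 1, exp (2 * π * I * n * t) * conj (exp (2 * π * I * m * t)) =
      if n = m then 1 else 0 := by
  have h : ∀ t : ℝ, exp (2 * π * I * n * t) * conj (exp (2 * π * I * m * t)) =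
      exp (2 * π * I * ((n - m : ℤ) : ℂ) * t) := fun t => by
    rw [← exp_conj, ← exp_add]
    simp only [map_mul, conj_I, conj_ofReal, conj_natCast, map_ofNat]
    push_cast
    ring_nf
  simp only [h, integral_exp_two_pi_I_int_mul, sub_eq_zero, Nat.cast_inj]

theorem integral_norm_sq_expSum (a : ℝ) (s : Finset ℕ) (c : ℕ → ℂ) :
    ∫ t in a..a + 1, ‖expSum s c t‖ ^ 2 = ∑ n ∈ s, ‖c n‖ ^ 2 := by
  have expand : ∀ t : ℝ, ((‖expSum s c t‖ ^ 2 : ℝ) : ℂ) = ∑ n ∈ s, ∑ m ∈ s,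
      c n * conj (c m) * (exp (2 * π * I * n * t) * conj (exp (2 * π * I * m * t))) := by
    intro t
    rw [ofReal_pow, ← mul_conj', expSum, map_sum, sum_mul_sum]
    refine sum_congr rfl fun n _ => sum_congr rfl fun m _ => ?_
    simp only [map_mul]
    ring
  apply ofReal_injective
  rw [← intervalIntegral.integral_ofReal]
  simp only [expand]
  have hint : ∀ n m : ℕ, IntervalIntegrable (fun t : ℝ => c n * conj (c m) *
      (exp (2 * π * I * n * t) * conj (exp (2 * π * I * m * t)))) volume a (a + 1) :=
    fun n m => Continuous.intervalIntegrable (by fun_prop) _ _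
  rw [intervalIntegral.integral_finsetSum fun n _ =>
    Continuous.intervalIntegrable (by fun_prop) _ _]
  simp only [intervalIntegral.integral_finsetSum fun m _ => hint _ m,
    intervalIntegral.integral_const_mul, integral_exp_mul_conj_exp, mul_ite, mul_one, mul_zero,
    sum_ite_eq, mul_conj', ofReal_sum, ofReal_pow]
  exact sum_congr rfl fun n hn => by simp [hn]

theorem norm_one_div_natCast_mul (N : ℕ) (z : ℂ) : ‖1 / (N : ℂ) * z‖ = ‖z‖ / N := by
  rw [norm_mul, norm_div, norm_one, norm_natCast, one_div_mul_eq_div]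

theorem sum_norm_sq_one_div_mul_le {c : ℕ → ℂ} (hc : ∀ n, ‖c n‖ ≤ Real.log n) (N : ℕ) :
    ∑ n ∈ Icc 1 N, ‖1 / (N : ℂ) * c n‖ ^ 2 ≤ Real.log N ^ 2 / N := by
  calc ∑ n ∈ Icc 1 N, ‖1 / (N : ℂ) * c n‖ ^ 2 ≤ ∑ n ∈ Icc 1 N, (Real.log N / N) ^ 2 := by
        refine sum_le_sum fun n hn => ?_
        obtain ⟨hn1, hnN⟩ := mem_Icc.1 hn
        rw [norm_one_div_natCast_mul]
        gcongr
        exact (hc n).trans (Real.log_le_log (by exact_mod_cast hn1) (by exact_mod_cast hnN))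
    _ = Real.log N ^ 2 / N := by
        rw [sum_const, Nat.card_Icc, add_tsub_cancel_right, nsmul_eq_mul]
        rcases eq_or_ne (N : ℝ) 0 with hN | hN
        · simp [hN]
        · field_simp

theorem lintegral_enorm_sq_average_le {c : ℕ → ℂ} (hc : ∀ n, ‖c n‖ ≤ Real.log n) (a : ℝ)
    (N : ℕ) :
    ∫⁻ t in Set.Ioc a (a + 1), ‖1 / (N : ℂ) * expSum (Icc 1 N) c t‖ₑ ^ 2 ≤
      ENNReal.ofReal (Real.log N ^ 2 / N) := by
  simp only [const_mul_expSum]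
  have hcont : Continuous fun t => ‖expSum (Icc 1 N) (fun n => 1 / (N : ℂ) * c n) t‖ ^ 2 :=
    (continuous_expSum _ _).norm.pow 2
  simp_rw [← ofReal_norm, ← ENNReal.ofReal_pow (norm_nonneg _)]
  rw [← ofReal_integral_eq_lintegral_ofReal hcont.integrableOn_Ioc
    (ae_of_all _ fun t => by positivity), ← intervalIntegral.integral_of_le (by linarith),
    integral_norm_sq_expSum]
  exact ENNReal.ofReal_le_ofReal (sum_norm_sq_one_div_mul_le hc N)

theorem log_sq_div_pow_four_le (k : ℕ) :
    Real.log ((k ^ 4 : ℕ) : ℝ) ^ 2 / ((k ^ 4 : ℕ) : ℝ) ≤ 16 / (k : ℝ) ^ 2 := by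
  rcases Nat.eq_zero_or_pos k with rfl | hk
  · simp
  have hk' : (0 : ℝ) < k := by exact_mod_cast hk
  have hlog : Real.log k ≤ k := (Real.log_le_sub_one_of_pos hk').trans (by linarith)
  have hlog0 : 0 ≤ Real.log k := Real.log_nonneg (by exact_mod_cast hk)
  push_cast
  rw [Real.log_pow, div_le_div_iff₀ (by positivity) (by positivity)]
  push_cast
  nlinarith [mul_le_mul hlog hlog hlog0 hk'.le]

theorem ae_tendsto_average_expSum_pow_four {c : ℕ → ℂ} (hc : ∀ n, ‖c n‖ ≤ Real.log n) :
    ∀ᵐ t, Tendsto (fun k : ℕ => 1 / ((k ^ 4 : ℕ) : ℂ) * expSum (Icc 1 (k ^ 4)) c t)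
      atTop (𝓝 0) := by
  refine ae_of_forall_ae_restrict_Ioc_intCast fun m => ?_
  refine ae_tendsto_zero_of_tsum_lintegral_enorm_sq_ne_top
    (fun k => (continuous_const.mul (continuous_expSum _ _)).aestronglyMeasurable) ?_
  have hsum : Summable fun k : ℕ => 16 / (k : ℝ) ^ 2 := by
    simpa only [div_eq_mul_inv, one_mul] using
      (Real.summable_one_div_nat_pow.2 one_lt_two).mul_left 16
  refine ne_top_of_le_ne_top (ENNReal.ofReal_tsum_of_nonneg (fun k => by positivity) hsum ▸
    ENNReal.ofReal_ne_top) (ENNReal.tsum_le_tsum fun k => ?_)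
  exact (lintegral_enorm_sq_average_le hc _ _).trans
    (ENNReal.ofReal_le_ofReal (log_sq_div_pow_four_le k))

theorem norm_expSum_Icc_sub_le {c : ℕ → ℂ} (hc : ∀ n, ‖c n‖ ≤ Real.log n) (t : ℝ) {M N : ℕ}
    (h : M ≤ N) : ‖expSum (Icc 1 N) c t - expSum (Icc 1 M) c t‖ ≤ ((N : ℝ) - M) * Real.log N := by
  have hsplit : expSum (Icc 1 N) c t - expSum (Icc 1 M) c t = expSum (Ioc M N) c t := by
    rw [expSum, expSum, expSum, show Icc 1 N = Ioc 0 N from Icc_add_one_left_eq_Ioc 0 N,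
      show Icc 1 M = Ioc 0 M from Icc_add_one_left_eq_Ioc 0 M, sub_eq_iff_eq_add',
      sum_Ioc_consecutive _ M.zero_le h]
  calc ‖expSum (Icc 1 N) c t - expSum (Icc 1 M) c t‖ ≤ ∑ n ∈ Ioc M N, ‖c n‖ := by
        rw [hsplit]; exact norm_expSum_le _ _ _
    _ ≤ ∑ n ∈ Ioc M N, Real.log N := sum_le_sum fun n hn => (hc n).trans <|
        Real.log_le_log (by exact_mod_cast (mem_Ioc.1 hn).1.trans_le' M.zero_le)
          (by exact_mod_cast (mem_Ioc.1 hn).2)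
    _ = ((N : ℝ) - M) * Real.log N := by
        rw [sum_const, Nat.card_Ioc, nsmul_eq_mul, Nat.cast_sub h]

theorem sqrt_sqrt_pow_four_le (N : ℕ) : N.sqrt.sqrt ^ 4 ≤ N :=
  calc N.sqrt.sqrt ^ 4 = (N.sqrt.sqrt ^ 2) ^ 2 := by ring
    _ ≤ N.sqrt ^ 2 := Nat.pow_le_pow_left (Nat.sqrt_le' _) 2
    _ ≤ N := Nat.sqrt_le' N

theorem lt_sqrt_sqrt_add_one_pow_four (N : ℕ) : N < (N.sqrt.sqrt + 1) ^ 4 :=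
  calc N < (N.sqrt + 1) ^ 2 := Nat.lt_succ_sqrt' N
    _ ≤ ((N.sqrt.sqrt + 1) ^ 2) ^ 2 :=
      Nat.pow_le_pow_left (Nat.lt_succ_sqrt' _) 2
    _ = (N.sqrt.sqrt + 1) ^ 4 := by ring

theorem tendsto_sqrt_sqrt_atTop : Tendsto (fun N : ℕ => N.sqrt.sqrt) atTop atTop :=
  tendsto_atTop_atTop.2 fun b => ⟨b ^ 4, fun N hN => by
    calc b = (b ^ 4).sqrt.sqrt := by
          rw [show b ^ 4 = (b ^ 2) ^ 2 by ring, Nat.sqrt_eq', Nat.sqrt_eq']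
      _ ≤ N.sqrt.sqrt := Nat.sqrt_le_sqrt (Nat.sqrt_le_sqrt hN)⟩

theorem tendsto_log_add_one_div_natCast :
    Tendsto (fun k : ℕ => Real.log (k + 1) / k) atTop (𝓝 0) := by
  have h := (Real.tendsto_pow_log_div_mul_add_atTop 1 (-1) 1 one_ne_zero).comp
    (tendsto_atTop_add_const_right _ 1 tendsto_natCast_atTop_atTop)
  refine h.congr fun k => ?_
  simp only [Function.comp_apply, pow_one]
  ring_nf

theorem sub_pow_four_mul_log_div_le {k N : ℕ} (hk : 1 ≤ k) (hkN : k ^ 4 ≤ N)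
    (hNk : N < (k + 1) ^ 4) :
    ((N : ℝ) - k ^ 4) * Real.log N / N ≤ 60 * Real.log (k + 1) / k := by
  have hk1 : (1 : ℝ) ≤ k := by exact_mod_cast hk
  have hkN' : (k : ℝ) ^ 4 ≤ N := by exact_mod_cast hkN
  have hNk' : (N : ℝ) + 1 ≤ (k + 1) ^ 4 := by exact_mod_cast hNk
  have hgap : (N : ℝ) - k ^ 4 ≤ 15 * k ^ 3 := by
    nlinarith [pow_le_pow_right₀ hk1 (show 1 ≤ 3 by norm_num),
      pow_le_pow_right₀ hk1 (show 2 ≤ 3 by norm_num)]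
  have hN1 : (1 : ℝ) ≤ N := (one_le_pow₀ hk1).trans hkN'
  have hlog : Real.log N ≤ 4 * Real.log (k + 1) :=
    calc Real.log N ≤ Real.log ((k + 1) ^ 4) := Real.log_le_log (by linarith) (by linarith)
      _ = 4 * Real.log (k + 1) := by rw [Real.log_pow]; norm_num
  have hlog0 : 0 ≤ Real.log N := Real.log_nonneg hN1
  have hlogk0 : 0 ≤ Real.log (k + 1) := Real.log_nonneg (by linarith)
  rw [div_le_div_iff₀ (by linarith) (by linarith)]
  calc ((N : ℝ) - k ^ 4) * Real.log N * k ≤ (15 * k ^ 3) * (4 * Real.log (k + 1)) * k := by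
        gcongr
    _ = 60 * Real.log (k + 1) * k ^ 4 := by ring
    _ ≤ 60 * Real.log (k + 1) * N := by gcongr

theorem tendsto_average_of_tendsto_average_pow_four {S : ℕ → ℂ}
    (hS : ∀ M N, M ≤ N → ‖S N - S M‖ ≤ ((N : ℝ) - M) * Real.log N)
    (h : Tendsto (fun k : ℕ => 1 / ((k ^ 4 : ℕ) : ℂ) * S (k ^ 4)) atTop (𝓝 0)) :
    Tendsto (fun N : ℕ => 1 / (N : ℂ) * S N) atTop (𝓝 0) := by
  rw [tendsto_zero_iff_norm_tendsto_zero] at h ⊢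
  have hbound :=
    (h.add (tendsto_log_add_one_div_natCast.const_mul 60)).comp tendsto_sqrt_sqrt_atTop
  rw [zero_add, mul_zero] at hbound
  refine squeeze_zero (fun N => norm_nonneg _) (fun N => ?_) hbound
  rcases Nat.eq_zero_or_pos N with rfl | hN
  · simp
  set k := N.sqrt.sqrt
  have hk : 1 ≤ k := Nat.sqrt_pos.2 (Nat.sqrt_pos.2 hN)
  have hkN := sqrt_sqrt_pow_four_le N
  have hk4 : (0 : ℝ) < ((k ^ 4 : ℕ) : ℝ) := by exact_mod_cast pow_pos hk 4
  calc ‖1 / (N : ℂ) * S N‖ = ‖S N‖ / N := norm_one_div_natCast_mul N (S N)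
    _ ≤ (‖S (k ^ 4)‖ + ((N : ℝ) - k ^ 4) * Real.log N) / N := by
        gcongr
        refine (norm_le_norm_add_norm_sub' _ (S (k ^ 4))).trans ?_
        simpa using hS _ _ hkN
    _ = ‖S (k ^ 4)‖ / N + ((N : ℝ) - k ^ 4) * Real.log N / N := add_div _ _ _
    _ ≤ ‖S (k ^ 4)‖ / ((k ^ 4 : ℕ) : ℝ) + 60 * Real.log (k + 1) / k := by
        refine add_le_add ?_ (sub_pow_four_mul_log_div_le hk hkN (lt_sqrt_sqrt_add_one_pow_four N))
        exact div_le_div_of_nonneg_left (norm_nonneg _) hk4 (by exact_mod_cast hkN)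
    _ = _ := by simp only [Function.comp_apply, norm_one_div_natCast_mul, mul_div_assoc]; rfl

theorem vonMangoldt_weighted_exponential_averages_ae_zero :
    ∀ᵐ (t : ℝ) ∂(volume : Measure ℝ), Tendsto (fun N : ℕ =>
      (1 / (N : ℂ)) * ∑ n ∈ Finset.Icc 1 N,
        (ArithmeticFunction.vonMangoldt n : ℂ) *
          Complex.exp (2 * Real.pi * Complex.I * (n : ℂ) * (t : ℂ)))
      atTop (nhds 0) := by
  have hΛ : ∀ n, ‖(ArithmeticFunction.vonMangoldt n : ℂ)‖ ≤ Real.log n := fun n => by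
    rw [norm_real, Real.norm_of_nonneg ArithmeticFunction.vonMangoldt_nonneg]
    exact ArithmeticFunction.vonMangoldt_le_log
  filter_upwards [ae_tendsto_average_expSum_pow_four hΛ] with t ht
  exact tendsto_average_of_tendsto_average_pow_four
    (fun M N h => norm_expSum_Icc_sub_le hΛ t h) ht
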